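/- Discrete orthogonality of Chebyshev polynomials at Chebyshev points: for every integer n ≥ 1 and all natural numbers j, k with 0 ≤ j, k ≤ n − 1, the sum ∑_{l=1}^{n} T_j(t_l) T_k(t_l), where t_l = cos((l − 1/2)π/n), equals 0 if j ≠ k, equals n/2 if j = k ≥ 1, and equals n if j = k = 0. -/

import Mathlib

/-!
The Chebyshev points are the nodes of Gauss–Chebyshev quadrature, which is exact for polynomials
of degree `< 2n`. Since `T_j T_k` has degree `j + k ≤ 2n - 2`, the discrete sum is `n / π` times
`∫ T_j T_k dx / √(1 - x²)` over `[-1, 1]`, and the claim is the continuous orthogonality of the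
Chebyshev polynomials.
-/

open Real Polynomial

namespace Polynomial.Chebyshev

open Finset

theorem sumZeroes_eq_sum_Icc (n : ℕ) (P : ℝ[X]) :
    sumZeroes n P = π / n * ∑ l ∈ Icc 1 n, P.eval (cos (((l : ℝ) - 1 / 2) * π / n)) := by
  rw [sumZeroes, ← Ico_add_one_right_eq_Icc, sum_Ico_eq_sum_range]
  congr 1
  refine sum_congr rfl fun i _ => ?_
  push_cast
  ring_nf

theorem sum_Icc_eval_cos_eq_integral_measureT {n : ℕ} {P : ℝ[X]} (hn : n ≠ 0)
    (hP : P.degree < 2 * n) :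
    ∑ l ∈ Icc 1 n, P.eval (cos (((l : ℝ) - 1 / 2) * π / n)) =
      n / π * ∫ x, P.eval x ∂measureT := by
  have hπn : (n : ℝ) / π * (π / n) = 1 := by field_simp
  rw [integral_eq_sumZeroes hn hP, sumZeroes_eq_sum_Icc, ← mul_assoc, hπn, one_mul]

end Polynomial.Chebyshev

open Polynomial.Chebyshev in
/-- Discrete orthogonality of Chebyshev polynomials at the Chebyshev points:
for `n ≥ 1` and `0 ≤ j, k ≤ n - 1`, the sum `∑_{l=1}^n T_j(t_l) T_k(t_l)` equals
`0` if `j ≠ k`, equals `n` if `j = k = 0`, and equals `n/2` if `j = k ≥ 1`. -/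
theorem chebyshev_discrete_orthogonality (n : ℕ) (hn : 1 ≤ n) (j k : ℕ)
    (hj : j ≤ n - 1) (hk : k ≤ n - 1) :
    (∑ l ∈ Finset.Icc 1 n,
        (Polynomial.Chebyshev.T ℝ j).eval (Real.cos (((l : ℝ) - 1 / 2) * Real.pi / n)) *
        (Polynomial.Chebyshev.T ℝ k).eval (Real.cos (((l : ℝ) - 1 / 2) * Real.pi / n)))
      = if j = k then (if j = 0 then (n : ℝ) else (n : ℝ) / 2) else 0 := by
  have hdeg : (T ℝ j * T ℝ k).degree < 2 * n := by
    rw [degree_mul, degree_T, degree_T]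
    exact_mod_cast (by omega : j + k < 2 * n)
  simp_rw [← eval_mul, sum_Icc_eval_cos_eq_integral_measureT (by omega) hdeg, eval_mul]
  split_ifs with hjk hj0
  · subst hjk hj0
    rw [Nat.cast_zero, integral_eval_T_real_mul_self_measureT_zero]
    field_simp
  · subst hjk
    rw [integral_T_real_mul_self_measureT_of_ne_zero hj0]
    field_simp
  · rw [integral_eval_T_real_mul_eval_T_real_measureT_of_ne hjk, mul_zero]
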